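/- Let Ω ⊂ ℝⁿ be a bounded open convex set, o ∈ Ω a point such that the Euclidean ball B(o,1/n) is contained in Ω and Ω is contained in the Euclidean unit ball B(o,1). Then for every R > 0 one has B_Ω(o,R) ⊂ AsB(o, R + ln 2) and AsB(o,R) ⊂ B_Ω(o, R + ln(n+1)); moreover the first inclusion B_Ω(o,R) ⊂ AsB(o, R + ln 2) holds for any bounded open convex set Ω and any o ∈ Ω. -/

import Mathlib

open Filter MeasureTheory Metric Set

noncomputable section
open scoped Classical

abbrev Euc (n : ℕ) := EuclideanSpace ℝ (Fin n)

variable {n : ℕ}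

/-- Parameters `t` such that `p + t • (q - p)` lies in `Ω`. For a bounded open convex `Ω`
containing `p` and `q`, this is an open interval `(t⁻, t⁺)` with `t⁻ < 0 < 1 < t⁺`, and the
two boundary points of the chord through `p`, `q` are obtained at `sInf` and `sSup`. -/
def lineParams (Ω : Set (Euc n)) (p q : Euc n) : Set ℝ := {t : ℝ | p + t • (q - p) ∈ Ω}

/-- The Hilbert distance of `Ω`. -/
noncomputable def hilbertDist (Ω : Set (Euc n)) (p q : Euc n) : ℝ :=
  if p = q then 0 else
    (1 / 2) * Real.log
      (((1 - sInf (lineParams Ω p q)) / (-(sInf (lineParams Ω p q)))) *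
        (sSup (lineParams Ω p q) / (sSup (lineParams Ω p q) - 1)))

/-- The Hilbert metric ball `B_Ω(p, r) = {x ∈ Ω : d_Ω(p,x) ≤ r}`. -/
def hilbertBall (Ω : Set (Euc n)) (p : Euc n) (r : ℝ) : Set (Euc n) :=
  {x ∈ Ω | hilbertDist Ω p x ≤ r}

/-- The Finsler norm `F_Ω(p, v) = (1/2)(1/t⁺ + 1/t⁻)`. -/
noncomputable def finslerF (Ω : Set (Euc n)) (p v : Euc n) : ℝ :=
  if v = 0 then 0 else
    (1 / 2) * (1 / sSup {t : ℝ | p + t • v ∈ Ω} + 1 / (-(sInf {t : ℝ | p + t • v ∈ Ω})))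

/-- The Busemann volume of `A ⊆ Ω`. -/
noncomputable def busemannVol (Ω A : Set (Euc n)) : ℝ :=
  (∫⁻ p in A, volume (Metric.ball (0 : Euc n) 1) /
      volume {v : Euc n | finslerF Ω p v < 1}).toReal

/-- The volume entropy of `Ω` with basepoint `p`. -/
noncomputable def hilbertEntropy (Ω : Set (Euc n)) (p : Euc n) : ℝ :=
  liminf (fun r : ℝ => Real.log (busemannVol Ω (hilbertBall Ω p r)) / r) atTop

/-- `N(ε, Ω)`: the smallest cardinality of a finite set of points whose convex hull is at
Hausdorff distance at most `ε` from the closure of `Ω`. -/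
noncomputable def approxN (Ω : Set (Euc n)) (ε : ℝ) : ℕ :=
  sInf {N : ℕ | ∃ S : Finset (Euc n), S.card = N ∧
    Metric.hausdorffDist (convexHull ℝ (S : Set (Euc n))) (closure Ω) ≤ ε}

/-- The approximability `a(Ω) = liminf_{ε→0⁺} ln N(ε,Ω) / (−ln ε)`. -/
noncomputable def approximability (Ω : Set (Euc n)) : ℝ :=
  liminf (fun ε : ℝ => Real.log (approxN Ω ε) / (-Real.log ε)) (nhdsWithin 0 (Set.Ioi 0))

/-- The polytopal dimension `PD(Ω) = 2 a(Ω)`. -/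
noncomputable def polytopalDim (Ω : Set (Euc n)) : ℝ := 2 * approximability Ω

/-- The asymptotic ball `AsB(o, R)`: image of `Ω` under the dilation of ratio `tanh R`
centred at `o`. -/
def asymptoticBall (Ω : Set (Euc n)) (o : Euc n) (R : ℝ) : Set (Euc n) :=
  (fun x => o + Real.tanh R • (x - o)) '' Ω

/-- The critical exponent of a subset `G ⊆ Ω` with basepoint `x₀`. -/
noncomputable def critExp (Ω G : Set (Euc n)) (x₀ : Euc n) : ℝ :=
  sInf {s : ℝ | 0 < s ∧
    Summable (fun γ : G => Real.exp (-s * hilbertDist Ω (γ : Euc n) x₀))}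

end

/-!
Along the line from `o` through `x ≠ o`, the chord of `Ω` has parameters `a < 0 < 1 < b`, and
`exp (2 d_Ω(o,x)) = (1 - a)/(-a) · b/(b - 1)` is the product of a backward and a forward factor,
both `≥ 1`. Membership `x ∈ AsB(o,R)` only sees the forward end: it means `(tanh R)⁻¹ < b`.
Hence `d_Ω(o,x) ≤ R` gives `b/(b - 1) ≤ e^{2R}`, which forces `b > coth (R + log 2)`.
Conversely, for `x ∈ AsB(o,R)` the forward factor is at most `1/(1 - tanh R)`, while
`B(o,ρ) ⊆ Ω ⊆ B(o,1)` gives `‖x - o‖ < tanh R` and `-a ≥ ρ/‖x - o‖`, so the backward factor is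
at most `1 + tanh R / ρ`; the product is at most `e^{2R}(1 + 1/ρ)`, and `ρ = 1/n`.
-/

open Metric Set Real

section OrderTopology

variable {α : Type*} [ConditionallyCompleteLinearOrder α] [TopologicalSpace α] [OrderTopology α]
  [DenselyOrdered α] [NoMinOrder α] [NoMaxOrder α]

theorem IsOpen.eq_Ioo_csInf_csSup {s : Set α} (hs : IsOpen s) (hc : IsConnected s)
    (hb : BddBelow s) (ha : BddAbove s) : s = Ioo (sInf s) (sSup s) := by
  refine Subset.antisymm (fun x hx => ⟨?_, ?_⟩) (hc.Ioo_csInf_csSup_subset hb ha)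
  · obtain ⟨l, hlx, hl⟩ := exists_Ioc_subset_of_mem_nhds (hs.mem_nhds hx) (exists_lt x)
    obtain ⟨y, hly, hyx⟩ := exists_between hlx
    exact (csInf_le hb (hl ⟨hly, hyx.le⟩)).trans_lt hyx
  · obtain ⟨l, hxl, hl⟩ := exists_Ico_subset_of_mem_nhds (hs.mem_nhds hx) (exists_gt x)
    obtain ⟨y, hxy, hyl⟩ := exists_between hxl
    exact hxy.trans_le (le_csSup ha (hl ⟨hxy.le, hyl⟩))

end OrderTopology

section LineParams

variable {n : ℕ} {Ω : Set (Euc n)} {p q : Euc n}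

theorem lineParams_eq_preimage_lineMap :
    lineParams Ω p q = AffineMap.lineMap (k := ℝ) p q ⁻¹' Ω := by
  ext t
  simp [lineParams, AffineMap.lineMap_apply_module', add_comm]

theorem zero_mem_lineParams (hp : p ∈ Ω) : (0 : ℝ) ∈ lineParams Ω p q := by
  simpa [lineParams] using hp

theorem one_mem_lineParams (hq : q ∈ Ω) : (1 : ℝ) ∈ lineParams Ω p q := by
  simpa [lineParams] using hq

theorem isBounded_lineParams (hΩ : Bornology.IsBounded Ω) (hpq : p ≠ q) :
    Bornology.IsBounded (lineParams Ω p q) := by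
  obtain ⟨C, hC⟩ := hΩ.subset_closedBall p
  have hqp : 0 < ‖q - p‖ := norm_pos_iff.2 (sub_ne_zero.2 hpq.symm)
  refine (isBounded_closedBall (x := (0 : ℝ)) (r := C / ‖q - p‖)).subset fun t ht => ?_
  have hpt := hC ht
  rw [mem_closedBall, dist_eq_norm, add_sub_cancel_left, norm_smul] at hpt
  rwa [mem_closedBall, dist_zero_right, le_div_iff₀ hqp]

theorem lineParams_eq_Ioo (hΩopen : IsOpen Ω) (hΩconv : Convex ℝ Ω)
    (hΩbdd : Bornology.IsBounded Ω) (hp : p ∈ Ω) (hpq : p ≠ q) :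
    lineParams Ω p q = Ioo (sInf (lineParams Ω p q)) (sSup (lineParams Ω p q)) := by
  have hbdd := isBounded_lineParams hΩbdd hpq
  rw [lineParams_eq_preimage_lineMap] at hbdd ⊢
  exact (hΩopen.preimage AffineMap.lineMap_continuous).eq_Ioo_csInf_csSup
    ⟨⟨0, by simpa using hp⟩, (hΩconv.affine_preimage _).isPreconnected⟩ hbdd.bddBelow hbdd.bddAbove

end LineParams

theorem tanh_eq_exp_two_mul (x : ℝ) : tanh x = (exp (2 * x) - 1) / (exp (2 * x) + 1) := by
  have hx : exp x ≠ 0 := (exp_pos x).ne'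
  rw [tanh_eq, mul_comm, exp_mul, exp_neg, rpow_two]
  field_simp

theorem tanh_pos_of_pos {x : ℝ} (hx : 0 < x) : 0 < tanh x := by
  rw [tanh_eq_sinh_div_cosh]
  exact div_pos (sinh_pos_iff.2 hx) (cosh_pos x)

theorem tanh_nonneg_of_nonneg {x : ℝ} (hx : 0 ≤ x) : 0 ≤ tanh x := by
  rw [tanh_eq_sinh_div_cosh]
  exact div_nonneg (sinh_nonneg_iff.2 hx) (cosh_pos x).le

theorem inv_tanh_add_log_two_lt {b R : ℝ} (hb : 1 < b) (h : b / (b - 1) ≤ exp (2 * R)) :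
    (tanh (R + log 2))⁻¹ < b := by
  set E := exp (2 * R)
  have hE : 1 < E := ((one_lt_div (by linarith)).2 (by linarith)).trans_le h
  have hexp : exp (2 * (R + log 2)) = 4 * E := by
    rw [mul_add, exp_add, two_mul (log 2), exp_add, exp_log two_pos]
    ring
  rw [div_le_iff₀ (by linarith)] at h
  rw [tanh_eq_exp_two_mul, hexp, inv_div, div_lt_iff₀ (by linarith)]
  nlinarith

theorem one_add_mul_tanh_div_one_sub_tanh_le {c R : ℝ} (hc : 0 ≤ c) (hR : 0 ≤ R) :
    (1 + c * tanh R) / (1 - tanh R) ≤ exp (2 * R) * (1 + c) := by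
  have hE : 1 ≤ exp (2 * R) := one_le_exp (by linarith)
  have hτ : tanh R * (exp (2 * R) + 1) = exp (2 * R) - 1 := by
    rw [tanh_eq_exp_two_mul, div_mul_cancel₀ _ (by linarith)]
  rw [div_le_iff₀ (by linarith [tanh_lt_one R])]
  nlinarith [tanh_lt_one R]

theorem one_sub_div_neg_le_one_add {a c : ℝ} (hc : 0 < c) (ha : c⁻¹ ≤ -a) :
    (1 - a) / -a ≤ 1 + c := by
  have ha0 : 0 < -a := (inv_pos.2 hc).trans_le ha
  rw [inv_le_iff_one_le_mul₀' hc] at ha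
  rw [div_le_iff₀ ha0]
  nlinarith

theorem div_sub_one_le_inv_one_sub {b τ : ℝ} (hτ : 0 < τ) (hτ1 : τ < 1) (hb : τ⁻¹ ≤ b) :
    b / (b - 1) ≤ (1 - τ)⁻¹ := by
  have hb1 : 1 < b := (one_lt_inv₀ hτ |>.2 hτ1).trans_le hb
  rw [inv_le_iff_one_le_mul₀ hτ] at hb
  rw [div_le_iff₀ (by linarith), inv_mul_eq_div, le_div_iff₀ (by linarith)]
  nlinarith

section Chord

variable {n : ℕ} {Ω : Set (Euc n)} {p q : Euc n}

theorem sInf_lineParams_neg (hΩopen : IsOpen Ω) (hΩconv : Convex ℝ Ω)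
    (hΩbdd : Bornology.IsBounded Ω) (hp : p ∈ Ω) (hpq : p ≠ q) :
    sInf (lineParams Ω p q) < 0 := by
  have h := zero_mem_lineParams (q := q) hp
  rw [lineParams_eq_Ioo hΩopen hΩconv hΩbdd hp hpq] at h
  exact h.1

theorem one_lt_sSup_lineParams (hΩopen : IsOpen Ω) (hΩconv : Convex ℝ Ω)
    (hΩbdd : Bornology.IsBounded Ω) (hp : p ∈ Ω) (hq : q ∈ Ω) (hpq : p ≠ q) :
    1 < sSup (lineParams Ω p q) := by
  have h := one_mem_lineParams (p := p) hq
  rw [lineParams_eq_Ioo hΩopen hΩconv hΩbdd hp hpq] at h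
  exact h.2

theorem sInf_lineParams_le_of_ball_subset (hΩbdd : Bornology.IsBounded Ω) (hpq : p ≠ q)
    {ρ : ℝ} (hρ : 0 < ρ) (hball : ball p ρ ⊆ Ω) :
    sInf (lineParams Ω p q) ≤ -(ρ / ‖q - p‖) := by
  have hqp : 0 < ‖q - p‖ := norm_pos_iff.2 (sub_ne_zero.2 hpq.symm)
  have hlt : -(ρ / ‖q - p‖) < 0 := neg_neg_of_pos (by positivity)
  have hsub : Ioo (-(ρ / ‖q - p‖)) 0 ⊆ lineParams Ω p q := fun t ht => hball <| by
    rw [mem_ball, dist_eq_norm, add_sub_cancel_left, norm_smul, norm_of_nonpos ht.2.le,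
      ← lt_div_iff₀ hqp]
    linarith [ht.1]
  calc sInf (lineParams Ω p q)
      ≤ sInf (Ioo (-(ρ / ‖q - p‖)) 0) :=
        csInf_le_csInf (isBounded_lineParams hΩbdd hpq).bddBelow (nonempty_Ioo.2 hlt) hsub
    _ = -(ρ / ‖q - p‖) := csInf_Ioo hlt

theorem hilbertDist_self : hilbertDist Ω p p = 0 := if_pos rfl

theorem exp_two_mul_hilbertDist (hΩopen : IsOpen Ω) (hΩconv : Convex ℝ Ω)
    (hΩbdd : Bornology.IsBounded Ω) (hp : p ∈ Ω) (hq : q ∈ Ω) (hpq : p ≠ q) :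
    exp (2 * hilbertDist Ω p q) =
      (1 - sInf (lineParams Ω p q)) / -sInf (lineParams Ω p q) *
        (sSup (lineParams Ω p q) / (sSup (lineParams Ω p q) - 1)) := by
  have ha := sInf_lineParams_neg hΩopen hΩconv hΩbdd hp hpq
  have hb := one_lt_sSup_lineParams hΩopen hΩconv hΩbdd hp hq hpq
  rw [hilbertDist, if_neg hpq, ← mul_assoc, show (2 : ℝ) * (1 / 2) = 1 by norm_num, one_mul,
    exp_log]
  exact mul_pos (div_pos (by linarith) (by linarith)) (div_pos (by linarith) (by linarith))

end Chord

section AsymptoticBall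

variable {n : ℕ} {Ω : Set (Euc n)} {o x : Euc n} {R : ℝ}

theorem mem_asymptoticBall_iff_inv_tanh_mem_lineParams (hR : tanh R ≠ 0) :
    x ∈ asymptoticBall Ω o R ↔ (tanh R)⁻¹ ∈ lineParams Ω o x := by
  constructor
  · rintro ⟨y, hy, rfl⟩
    simpa [lineParams, smul_smul, hR] using hy
  · exact fun h => ⟨_, h, by simp [smul_smul, hR]⟩

theorem asymptoticBall_subset (hΩconv : Convex ℝ Ω) (ho : o ∈ Ω) (hR : 0 ≤ R) :
    asymptoticBall Ω o R ⊆ Ω := by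
  rintro _ ⟨y, hy, rfl⟩
  exact hΩconv.add_smul_sub_mem ho hy ⟨tanh_nonneg_of_nonneg hR, (tanh_lt_one R).le⟩

theorem mem_asymptoticBall_iff_inv_tanh_lt_sSup (hΩopen : IsOpen Ω) (hΩconv : Convex ℝ Ω)
    (hΩbdd : Bornology.IsBounded Ω) (ho : o ∈ Ω) (hxo : o ≠ x) (hR : 0 < R) :
    x ∈ asymptoticBall Ω o R ↔ (tanh R)⁻¹ < sSup (lineParams Ω o x) := by
  have hτ := tanh_pos_of_pos hR
  rw [mem_asymptoticBall_iff_inv_tanh_mem_lineParams hτ.ne',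
    Set.ext_iff.1 (lineParams_eq_Ioo hΩopen hΩconv hΩbdd ho hxo), mem_Ioo]
  exact and_iff_right ((sInf_lineParams_neg hΩopen hΩconv hΩbdd ho hxo).trans (inv_pos.2 hτ))

theorem norm_sub_lt_tanh_of_mem_asymptoticBall (houter : Ω ⊆ ball o 1) (hR : 0 < R)
    (hx : x ∈ asymptoticBall Ω o R) : ‖x - o‖ < tanh R := by
  have hτ := tanh_pos_of_pos hR
  have := houter ((mem_asymptoticBall_iff_inv_tanh_mem_lineParams hτ.ne').1 hx)
  rwa [mem_ball, dist_eq_norm, add_sub_cancel_left, norm_smul, norm_inv, norm_of_nonneg hτ.le,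
    inv_mul_lt_iff₀ hτ, mul_one] at this

end AsymptoticBall

section Inclusions

variable {n : ℕ} {Ω : Set (Euc n)} {o : Euc n}

theorem hilbertBall_subset_asymptoticBall_add_log_two (hΩopen : IsOpen Ω)
    (hΩconv : Convex ℝ Ω) (hΩbdd : Bornology.IsBounded Ω) (ho : o ∈ Ω) (R : ℝ) :
    hilbertBall Ω o R ⊆ asymptoticBall Ω o (R + log 2) := by
  rintro x ⟨hx, hdist⟩
  rcases eq_or_ne o x with rfl | hxo
  · exact ⟨o, ho, by simp⟩
  set a := sInf (lineParams Ω o x)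
  set b := sSup (lineParams Ω o x)
  have ha : a < 0 := sInf_lineParams_neg hΩopen hΩconv hΩbdd ho hxo
  have hb : 1 < b := one_lt_sSup_lineParams hΩopen hΩconv hΩbdd ho hx hxo
  have hforward_gt : 1 < b / (b - 1) := (one_lt_div (by linarith)).2 (by linarith)
  have hbackward_ge : 1 ≤ (1 - a) / -a := (one_le_div (by linarith)).2 (by linarith)
  have hforward : b / (b - 1) ≤ exp (2 * R) := calc
    b / (b - 1) ≤ (1 - a) / -a * (b / (b - 1)) :=
        le_mul_of_one_le_left (by linarith) hbackward_ge
    _ = exp (2 * hilbertDist Ω o x) := (exp_two_mul_hilbertDist hΩopen hΩconv hΩbdd ho hx hxo).symm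
    _ ≤ exp (2 * R) := exp_le_exp.2 (by linarith)
  have hR : 0 < R := by linarith [one_lt_exp_iff.1 (hforward_gt.trans_le hforward)]
  exact (mem_asymptoticBall_iff_inv_tanh_lt_sSup hΩopen hΩconv hΩbdd ho hxo
    (by linarith [log_pos one_lt_two])).2 (inv_tanh_add_log_two_lt hb hforward)

theorem asymptoticBall_subset_hilbertBall (hΩopen : IsOpen Ω) (hΩconv : Convex ℝ Ω)
    (hΩbdd : Bornology.IsBounded Ω) (ho : o ∈ Ω) {ρ : ℝ} (hρ : 0 < ρ) (hinner : ball o ρ ⊆ Ω)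
    (houter : Ω ⊆ ball o 1) {R : ℝ} (hR : 0 < R) :
    asymptoticBall Ω o R ⊆ hilbertBall Ω o (R + log (1 + ρ⁻¹) / 2) := by
  intro x hAsB
  have hx : x ∈ Ω := asymptoticBall_subset hΩconv ho hR.le hAsB
  refine ⟨hx, ?_⟩
  rcases eq_or_ne o x with rfl | hxo
  · rw [hilbertDist_self]
    linarith [log_nonneg (by linarith [inv_pos.2 hρ] : (1 : ℝ) ≤ 1 + ρ⁻¹)]
  set a := sInf (lineParams Ω o x)
  set b := sSup (lineParams Ω o x)
  set τ := tanh R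
  have hτ : 0 < τ := tanh_pos_of_pos hR
  have hr : 0 < ‖x - o‖ := norm_pos_iff.2 (sub_ne_zero.2 hxo.symm)
  have hbackward : (1 - a) / -a ≤ 1 + ρ⁻¹ * τ := by
    refine one_sub_div_neg_le_one_add (by positivity) ?_
    calc (ρ⁻¹ * τ)⁻¹ = ρ / τ := by rw [mul_inv, inv_inv, div_eq_mul_inv]
      _ ≤ ρ / ‖x - o‖ := div_le_div_of_nonneg_left hρ.le hr
          (norm_sub_lt_tanh_of_mem_asymptoticBall houter hR hAsB).le
      _ ≤ -a := le_neg.1 (sInf_lineParams_le_of_ball_subset hΩbdd hxo hρ hinner)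
  have hb : 1 < b := one_lt_sSup_lineParams hΩopen hΩconv hΩbdd ho hx hxo
  have hforward : b / (b - 1) ≤ (1 - τ)⁻¹ := div_sub_one_le_inv_one_sub hτ (tanh_lt_one R)
    ((mem_asymptoticBall_iff_inv_tanh_lt_sSup hΩopen hΩconv hΩbdd ho hxo hR).1 hAsB).le
  have hexp : exp (2 * hilbertDist Ω o x) ≤ exp (2 * (R + log (1 + ρ⁻¹) / 2)) := calc
    exp (2 * hilbertDist Ω o x) = (1 - a) / -a * (b / (b - 1)) :=
        exp_two_mul_hilbertDist hΩopen hΩconv hΩbdd ho hx hxo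
    _ ≤ (1 + ρ⁻¹ * τ) * (1 - τ)⁻¹ :=
        mul_le_mul hbackward hforward (div_pos (by linarith) (by linarith)).le (by positivity)
    _ ≤ exp (2 * R) * (1 + ρ⁻¹) :=
        one_add_mul_tanh_div_one_sub_tanh_le (inv_pos.2 hρ).le hR.le
    _ = exp (2 * (R + log (1 + ρ⁻¹) / 2)) := by
        rw [show 2 * (R + log (1 + ρ⁻¹) / 2) = 2 * R + log (1 + ρ⁻¹) by ring, exp_add,
          exp_log (by positivity)]
  linarith [exp_le_exp.1 hexp]

end Inclusions

open Filter MeasureTheory Metric Set in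
/-- **Metric balls vs asymptotic balls.** For any bounded open convex `Ω` and `o ∈ Ω`,
`B_Ω(o,R) ⊆ AsB(o, R + ln 2)`; if moreover `B(o,1/n) ⊆ Ω ⊆ B(o,1)` then also
`AsB(o,R) ⊆ B_Ω(o, R + ln(n+1))`. -/
theorem hilbertBall_asymptoticBall_inclusions (n : ℕ) (hn : 1 ≤ n) (Ω : Set (Euc n))
    (hΩopen : IsOpen Ω) (hΩconv : Convex ℝ Ω) (hΩbdd : Bornology.IsBounded Ω)
    (o : Euc n) (ho : o ∈ Ω) (R : ℝ) (hR : 0 < R) :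
    hilbertBall Ω o R ⊆ asymptoticBall Ω o (R + Real.log 2) ∧
    (Metric.ball o (1 / n) ⊆ Ω → Ω ⊆ Metric.ball o 1 →
      asymptoticBall Ω o R ⊆ hilbertBall Ω o (R + Real.log (n + 1))) := by
  refine ⟨hilbertBall_subset_asymptoticBall_add_log_two hΩopen hΩconv hΩbdd ho R,
    fun hinner houter => ?_⟩
  have hn' : (0 : ℝ) < n := by exact_mod_cast hn
  have hlog : log (1 + (1 / (n : ℝ))⁻¹) / 2 ≤ log (n + 1) := by
    rw [one_div, inv_inv, add_comm]
    linarith [log_nonneg (by linarith : (1 : ℝ) ≤ n + 1)]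
  exact (asymptoticBall_subset_hilbertBall hΩopen hΩconv hΩbdd ho (by positivity) hinner houter
    hR).trans fun x hx => ⟨hx.1, hx.2.trans (by linarith)⟩
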